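/- arXiv:1912.05815 — 4 statements merged into one kernel-verified Lean document; each statement's English description precedes it below -/
import Mathlib

section
/- Let c(x) ∈ R[x]/⟨x^N - λ⟩ and let 0 ≤ i ≤ N-1. Write (1-x)^i c(x) = d_0 + d_1 x + ... + d_{N-1} x^{N-1} modulo x^N - λ. Then the i-th derivative D^i(c) of the coefficient vector c = (c_0,...,c_{N-1}) equals (d_i, d_{i+1}, ..., d_{N-1}), the last N-i coefficients of (1-x)^i c(x). -/
variable {R : Type*} [CommRing R]

/-- The derivative (difference) operator on sequences/vectors. -/
def der (a : ℕ → R) : ℕ → R := fun k => a (k + 1) - a k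

open Classical in
/-- Depth of a vector `a ∈ R^N` (represented by its first `N` coordinates):
the least `i ≤ N-1` with `D^i(a) = 0 ∈ R^{N-i}`, and `N` if none exists. -/
noncomputable def depth (N : ℕ) (a : ℕ → R) : ℕ :=
  if h : ∃ i, i < N ∧ ∀ k, k < N - i → der^[i] a k = 0 then Nat.find h else N

/-!
The coefficient of `X ^ (k + 1)` in `(1 - X) * c` is `c (k + 1) - c k`, so by induction
`D^i c` is the coefficient sequence of `(1 - X) ^ i * c` read from index `i` on. That product has
degree `< N + i`, and reducing it modulo `X ^ N - λ` only folds its coefficients of degree `≥ N`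
onto degrees `< i`, leaving the coefficients of degree `i, …, N - 1` untouched.
-/

open Polynomial

theorem iterate_der_coeff (c : R[X]) (i k : ℕ) :
    der^[i] c.coeff k = ((1 - X) ^ i * c).coeff (i + k) := by
  induction i generalizing k with
  | zero => simp
  | succ i ih =>
    have h : (1 - X) ^ (i + 1) * c = (1 - X) ^ i * c - X * ((1 - X) ^ i * c) := by ring
    rw [Function.iterate_succ_apply', der, ih, ih, h, coeff_sub, add_right_comm i 1 k,
      coeff_X_mul, add_assoc]

theorem natDegree_one_sub_X_pow_mul_le (c : R[X]) (i : ℕ) :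
    ((1 - X) ^ i * c).natDegree ≤ i + c.natDegree := by
  have h : (1 - X : R[X]).natDegree ≤ 1 := by compute_degree
  calc ((1 - X) ^ i * c).natDegree ≤ ((1 - X : R[X]) ^ i).natDegree + c.natDegree :=
        natDegree_mul_le
    _ ≤ i * 1 + c.natDegree := by gcongr; exact natDegree_pow_le_of_le i h
    _ = i + c.natDegree := by rw [mul_one]

theorem coeff_modByMonic_X_pow_sub_C_of_natDegree_lt {p : R[X]} {N m : ℕ} (a : R) (hm : m < N)
    (hp : p.natDegree < N + m) : (p %ₘ (X ^ N - C a)).coeff m = p.coeff m := by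
  nontriviality R
  have hmonic : (X ^ N - C a).Monic := monic_X_pow_sub_C a (by omega)
  by_cases hpN : p.natDegree < N
  · rw [(modByMonic_eq_self_iff hmonic).mpr (degree_lt_degree (by rwa [natDegree_X_pow_sub_C]))]
  have hq : (p /ₘ (X ^ N - C a)).natDegree < m := by
    rw [natDegree_divByMonic p hmonic, natDegree_X_pow_sub_C]
    omega
  have hqm : ((X ^ N - C a) * (p /ₘ (X ^ N - C a))).coeff m = 0 := by
    rw [sub_mul, coeff_sub, coeff_X_pow_mul', if_neg (by omega), coeff_C_mul,
      coeff_eq_zero_of_natDegree_lt hq, mul_zero, sub_zero]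
  rw [modByMonic_eq_sub_mul_div, coeff_sub, hqm, sub_zero]

open Polynomial in
theorem iterated_derivative_eq_coeffs_general (N : ℕ) (lam : R)
    (c : Polynomial R) (hc : c.natDegree < N) (i : ℕ) :
    ∀ k, k < N - i →
      der^[i] c.coeff k = (((1 - X) ^ i * c) %ₘ (X ^ N - C lam)).coeff (i + k) := by
  intro k hk
  have hdeg := natDegree_one_sub_X_pow_mul_le c i
  rw [iterate_der_coeff, coeff_modByMonic_X_pow_sub_C_of_natDegree_lt lam (by omega) (by omega)]

open Polynomial in
theorem iterated_derivative_eq_coeffs (N : ℕ) (hN : 0 < N) (lam : R) (hlam : IsUnit lam)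
    (c : Polynomial R) (hc : c.natDegree < N) (i : ℕ) (hi : i ≤ N - 1) :
    ∀ k, k < N - i →
      der^[i] c.coeff k = (((1 - X) ^ i * c) %ₘ (X ^ N - C lam)).coeff (i + k) :=
  iterated_derivative_eq_coeffs_general N lam c hc i
end

section
/- Let c(x) ∈ R[x]/⟨x^N - λ⟩ and let ℓ, t be positive integers with ℓ + t ≤ N. If depth((1-x)^ℓ c(x)) = t, then depth(c(x)) = ℓ + t. -/
/-!
Write `a_ℓ` for the remainder of `(1 - x)^ℓ c` modulo `x^N - λ`, so that `a_0 = c` and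
`a_{ℓ+1}` is the remainder of `(1 - x) a_ℓ`. Reducing `x a_ℓ` modulo `x^N - λ` only changes the
constant coefficient, so for `1 ≤ k < N` the `k`-th coefficient of `a_{ℓ+1}` is the `(k-1)`-th
coefficient of `D a_ℓ`. Hence if `depth a_{ℓ+1} = s + 1 ≥ 1`, then `D^{s+2} a_ℓ = 0` and
`D^{s+1} a_ℓ ≠ 0`: otherwise `D^s a_{ℓ+1}` would vanish away from index `0`, and at index `0`
too because `D^{s+1} a_{ℓ+1} = 0`. So each factor `1 - x` removed raises the depth by one.
-/

variable {R : Type*} [CommRing R]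

def DerVanishes (N i : ℕ) (a : ℕ → R) : Prop :=
  ∀ k, k < N - i → der^[i] a k = 0

namespace DerVanishes

variable {N i : ℕ} {a : ℕ → R}

theorem self (N : ℕ) (a : ℕ → R) : DerVanishes N N a := fun k hk => absurd hk (by omega)

theorem succ (h : DerVanishes N i a) : DerVanishes N (i + 1) a := by
  intro k hk
  rw [Function.iterate_succ_apply', der, h k (by omega), h (k + 1) (by omega), sub_self]

theorem mono {j : ℕ} (hij : i ≤ j) (h : DerVanishes N i a) : DerVanishes N j a := by
  induction j, hij using Nat.le_induction with
  | base => exact h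
  | succ j _ ih => exact ih.succ

theorem of_succ_of_tail (hi : i + 1 < N) (h : DerVanishes N (i + 1) a)
    (htail : ∀ k, k + 1 < N - i → der^[i] a (k + 1) = 0) : DerVanishes N i a := by
  rintro (_ | k) hk
  · have h0 : der^[i] a 1 - der^[i] a 0 = 0 := by
      simpa only [Function.iterate_succ_apply', der] using h 0 (by omega)
    rwa [htail 0 (by omega), zero_sub, neg_eq_zero] at h0
  · exact htail k hk

end DerVanishes

section Depth

variable {N : ℕ} {a : ℕ → R}

open Classical in
theorem depth_eq_find :
    depth N a = Nat.find (⟨N, DerVanishes.self N a⟩ : ∃ i, DerVanishes N i a) := by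
  have hvan : ∃ i, DerVanishes N i a := ⟨N, DerVanishes.self N a⟩
  unfold depth
  split_ifs with hex
  · refine le_antisymm (Nat.find_min' hex ⟨?_, Nat.find_spec hvan⟩) (Nat.find_mono fun i hi => hi.2)
    exact (Nat.find_mono fun i hi => hi.2).trans_lt (Nat.find_spec hex).1
  · refine le_antisymm ?_ (Nat.find_min' _ (DerVanishes.self N a))
    by_contra! hlt
    exact hex ⟨_, hlt, Nat.find_spec hvan⟩

theorem depth_eq_succ_iff {s : ℕ} :
    depth N a = s + 1 ↔ DerVanishes N (s + 1) a ∧ ¬ DerVanishes N s a := by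
  classical
  rw [depth_eq_find, Nat.find_eq_iff]
  exact and_congr_right fun _ =>
    ⟨fun h => h s s.lt_succ_self, fun h i hi hvi => h (hvi.mono (Nat.le_of_lt_succ hi))⟩

theorem depth_eq_zero_of_subsingleton [Subsingleton R] : depth N a = 0 := by
  classical
  rw [depth_eq_find, Nat.find_eq_zero]
  exact fun _ _ => Subsingleton.elim _ _

end Depth

theorem iterate_der_eq_of_eq_shift {M : ℕ} {a b : ℕ → R} (h : ∀ k, k < M → a k = b (k + 1))
    (i : ℕ) : ∀ k, k + i < M → der^[i] a k = der^[i] b (k + 1) := by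
  induction i with
  | zero => exact fun k hk => h k hk
  | succ i ih =>
    intro k hk
    simp only [Function.iterate_succ_apply', der]
    rw [ih k (by omega), ih (k + 1) (by omega)]

theorem depth_eq_add_two_of_der_eq_shift {N s : ℕ} {a b : ℕ → R} (hsN : s + 2 ≤ N)
    (hb : ∀ k, k + 1 < N → der a k = b (k + 1)) (hdb : depth N b = s + 1) :
    depth N a = s + 2 := by
  rw [depth_eq_succ_iff] at hdb ⊢
  obtain ⟨hvb, hnvb⟩ := hdb
  have hshift := iterate_der_eq_of_eq_shift (M := N - 1) (fun k hk => hb k (by omega))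
  refine ⟨fun k hk => ?_, fun hva => hnvb (hvb.of_succ_of_tail (by omega) fun k hk => ?_)⟩
  · rw [Function.iterate_succ_apply, hshift (s + 1) k (by omega)]
    exact hvb (k + 1) (by omega)
  · rw [← hshift s k (by omega), ← Function.iterate_succ_apply]
    exact hva k (by omega)

namespace Polynomial

theorem mul_modByMonic_modByMonic {p q : R[X]} (r : R[X]) (hq : q.Monic) :
    (r * (p %ₘ q)) %ₘ q = (r * p) %ₘ q :=
  modByMonic_eq_of_dvd_sub hq <| by
    rw [← mul_sub]
    exact (dvd_modByMonic_sub p q).mul_left r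

theorem one_sub_X_mul_modByMonic_X_pow_sub_C [Nontrivial R] {N : ℕ} (hN : N ≠ 0) (lam : R)
    {a : R[X]} (ha : a.degree < N) :
    ((1 - X) * a) %ₘ (X ^ N - C lam)
      = (1 - X) * a + C (a.coeff (N - 1)) * (X ^ N - C lam) := by
  have hM : (X ^ N - C lam : R[X]).Monic := monic_X_pow_sub_C lam hN
  rw [modByMonic_eq_of_dvd_sub hM
    (p₂ := (1 - X) * a + C (a.coeff (N - 1)) * (X ^ N - C lam)) ⟨-C (a.coeff (N - 1)), by ring⟩,
    (modByMonic_eq_self_iff hM).2]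
  rw [degree_X_pow_sub_C (Nat.pos_of_ne_zero hN), degree_lt_iff_coeff_zero]
  intro m hm
  have hcoeff : ∀ j, N ≤ j → a.coeff j = 0 := fun j hj =>
    coeff_eq_zero_of_degree_lt (ha.trans_le (by exact_mod_cast hj))
  obtain ⟨k, rfl⟩ : ∃ k, m = k + 1 := ⟨m - 1, by omega⟩
  simp only [coeff_add, coeff_C_mul, coeff_sub, sub_mul, one_mul, coeff_X_mul, coeff_X_pow,
    coeff_C, hcoeff (k + 1) hm, if_neg k.succ_ne_zero]
  rcases eq_or_ne (k + 1) N with rfl | hkN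
  · simp
  · simp [hkN, hcoeff k (by omega)]

theorem coeff_one_sub_X_mul_modByMonic_X_pow_sub_C [Nontrivial R] {N : ℕ} (lam : R)
    {a : R[X]} (ha : a.degree < N) {k : ℕ} (hk : k + 1 < N) :
    (((1 - X) * a) %ₘ (X ^ N - C lam)).coeff (k + 1) = der a.coeff k := by
  rw [one_sub_X_mul_modByMonic_X_pow_sub_C (by omega) lam ha]
  simp [coeff_X_pow, der, show k + 1 ≠ N by omega, sub_mul]

end Polynomial

open Polynomial in
theorem depth_of_mul_one_sub_X_pow_general (N ℓ t : ℕ) (ht : 1 ≤ t) (hlt : ℓ + t ≤ N)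
    (lam : R) (c : Polynomial R) (hc : c.natDegree < N)
    (h : depth N ((((1 - X) ^ ℓ * c) %ₘ (X ^ N - C lam)).coeff) = t) :
    depth N c.coeff = ℓ + t := by
  rcases subsingleton_or_nontrivial R with _ | _
  · rw [depth_eq_zero_of_subsingleton] at h
    omega
  have hM : (X ^ N - C lam : R[X]).Monic := monic_X_pow_sub_C lam (by omega)
  have hdegM : (X ^ N - C lam : R[X]).degree = N := degree_X_pow_sub_C (by omega) lam
  obtain ⟨s, rfl⟩ : ∃ s, t = s + 1 := ⟨t - 1, by omega⟩
  induction ℓ generalizing s with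
  | zero =>
    have hdegc : c.degree < N := degree_le_natDegree.trans_lt (by exact_mod_cast hc)
    rw [zero_add, ← h, pow_zero, one_mul, (modByMonic_eq_self_iff hM).2 (hdegM ▸ hdegc)]
  | succ ℓ ih =>
    set a := ((1 - X) ^ ℓ * c) %ₘ (X ^ N - C lam)
    have hdega : a.degree < N := hdegM ▸ degree_modByMonic_lt _ hM
    rw [pow_succ', mul_assoc, ← mul_modByMonic_modByMonic _ hM] at h
    have hda : depth N a.coeff = s + 2 := depth_eq_add_two_of_der_eq_shift (by omega)
      (fun k hk => (coeff_one_sub_X_mul_modByMonic_X_pow_sub_C lam hdega hk).symm) h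
    have := ih (s + 1) (by omega) (by omega) hda
    omega

open Polynomial in
theorem depth_of_mul_one_sub_X_pow (N ℓ t : ℕ) (hℓ : 1 ≤ ℓ) (ht : 1 ≤ t) (hlt : ℓ + t ≤ N)
    (lam : R) (hlam : IsUnit lam) (c : Polynomial R) (hc : c.natDegree < N)
    (h : depth N ((((1 - X) ^ ℓ * c) %ₘ (X ^ N - C lam)).coeff) = t) :
    depth N c.coeff = ℓ + t :=
  depth_of_mul_one_sub_X_pow_general N ℓ t ht hlt lam c hc h
end

section
/- Let R be a finite commutative chain ring with maximal ideal ⟨γ⟩ of nilpotency index e, residue characteristic p, and λ = α + γβ a unit of R with α in the Teichmüller set and β a unit. Let N = n p^s with gcd(n, p) = 1. Let A(x) ∈ R[x] with μ(A(x)) ≠ 0. If x^{N} - λ divides γ^t A(x) in R[x] for some 0 ≤ t ≤ e-1, then x^{N} - λ̄ divides μ(A(x)) in R̄[x]. -/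
/-! Since `X ^ N - λ` is monic, it divides `γ ^ t • A` exactly when `γ ^ t • (A %ₘ (X ^ N - λ)) = 0`.
As `γ ^ t ≠ 0`, every coefficient of the remainder is annihilated by a nonzero element, hence is
not a unit and reduces to `0` in the residue field. Division by a monic polynomial commutes with
reduction, so the reduced remainder `μ A %ₘ (X ^ N - λ̄)` vanishes. -/

open IsLocalRing Polynomial

section

variable {R : Type*} [CommRing R] [IsLocalRing R]

theorem IsLocalRing.mem_maximalIdeal_of_mul_eq_zero {a c : R} (ha : a ≠ 0) (h : a * c = 0) :
    c ∈ maximalIdeal R :=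
  (mem_maximalIdeal c).2 fun hc => ha (hc.mul_left_eq_zero.1 h)

theorem Polynomial.map_residue_eq_zero_of_smul_eq_zero {a : R} (ha : a ≠ 0) {r : R[X]}
    (h : a • r = 0) : r.map (residue R) = 0 := by
  ext i
  rw [coeff_map, coeff_zero, residue_eq_zero_iff]
  refine mem_maximalIdeal_of_mul_eq_zero ha ?_
  simpa only [coeff_smul, coeff_zero, smul_eq_mul] using congrArg (coeff · i) h

theorem Polynomial.Monic.map_residue_dvd_of_dvd_C_mul {f A : R[X]} (hf : f.Monic) {a : R}
    (ha : a ≠ 0) (h : f ∣ C a * A) : f.map (residue R) ∣ A.map (residue R) := by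
  rw [← smul_eq_C_mul, ← modByMonic_eq_zero_iff_dvd hf, smul_modByMonic] at h
  rw [← modByMonic_eq_zero_iff_dvd (hf.map _), ← map_modByMonic _ hf]
  exact map_residue_eq_zero_of_smul_eq_zero ha h

end

theorem dvd_residue_of_dvd_gamma_pow_mul_general (R : Type*) [CommRing R] [IsLocalRing R]
    (γ : R)
    (e : ℕ) (hnil' : γ ^ (e - 1) ≠ 0)
    (p : ℕ) (hp : p.Prime)
    (α : R)
    (β : R)
    (n s : ℕ) (hn0 : 0 < n)
    (A : Polynomial R)
    (t : ℕ) (ht : t ≤ e - 1)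
    (hdvd : (X ^ (n * p ^ s) - C (α + γ * β)) ∣ (C (γ ^ t) * A)) :
    (X ^ (n * p ^ s) - C (residue R (α + γ * β))) ∣ A.map (residue R) := by
  have hγt : γ ^ t ≠ 0 := fun h0 => hnil' (pow_eq_zero_of_le ht h0)
  have hmonic : (X ^ (n * p ^ s) - C (α + γ * β)).Monic :=
    monic_X_pow_sub_C _ (Nat.mul_pos hn0 (pow_pos hp.pos s)).ne'
  simpa only [Polynomial.map_sub, Polynomial.map_pow, map_X, map_C] using
    hmonic.map_residue_dvd_of_dvd_C_mul hγt hdvd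

theorem dvd_residue_of_dvd_gamma_pow_mul (R : Type*) [CommRing R] [Finite R] [IsLocalRing R]
    (hchain : ∀ I J : Ideal R, I ≤ J ∨ J ≤ I)
    (γ : R) (hγ : maximalIdeal R = Ideal.span {γ})
    (e : ℕ) (he : 0 < e) (hnil : γ ^ e = 0) (hnil' : γ ^ (e - 1) ≠ 0)
    (p m : ℕ) (hp : p.Prime) (hm : 0 < m)
    (hcard : Nat.card (ResidueField R) = p ^ m)
    (ζ : R) (hζ : orderOf ζ = p ^ m - 1)
    (α : R) (hα : α ∈ insert (0 : R) (Set.range (ζ ^ · : ℕ → R))) (hα0 : α ≠ 0)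
    (β : R) (hβ : IsUnit β)
    (n s : ℕ) (hn : Nat.Coprime n p) (hn0 : 0 < n)
    (A : Polynomial R) (hA : A.map (residue R) ≠ 0)
    (t : ℕ) (ht : t ≤ e - 1)
    (hdvd : (X ^ (n * p ^ s) - C (α + γ * β)) ∣ (C (γ ^ t) * A)) :
    (X ^ (n * p ^ s) - C (residue R (α + γ * β))) ∣ A.map (residue R) :=
  dvd_residue_of_dvd_gamma_pow_mul_general R γ e hnil' p hp α β n s hn0 A t ht hdvd
end

section
/- Let R be a finite commutative chain ring with maximal ideal ⟨γ⟩ of nilpotency index e, residue characteristic p, λ = 1 + γβ with β a unit, and N = n p^s with gcd(n, p) = 1. Then in R[x]/⟨x^N - λ⟩, one has (x^n - 1)^{p^s} = γ H(x) for some unit H(x) of R[x]/⟨x^N - λ⟩. -/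
/-!
Since `p` lies in the maximal ideal, `p = γ c`. In any commutative ring,
`(y - 1) ^ p ^ s = y ^ p ^ s - 1 - p (y - 1) r` for some `r`; with `y = x ^ n` and
`y ^ p ^ s = 1 + γ β` this reads `(y - 1) ^ p ^ s = γ (β - c (y - 1) r)`. The right-hand side is
nilpotent because `γ` is, hence so is `y - 1`, and `β - c (y - 1) r` is a unit plus a nilpotent.
-/

open IsLocalRing Polynomial

theorem IsLocalRing.natCast_mem_maximalIdeal_of_charP_residueField (R : Type*) [CommRing R]
    [IsLocalRing R] (p : ℕ) [CharP (ResidueField R) p] : (p : R) ∈ maximalIdeal R := by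
  rw [← residue_eq_zero_iff, map_natCast, CharP.cast_eq_zero]

theorem exists_isUnit_sub_one_pow_eq_mul {S : Type*} [CommRing S] {p : ℕ} (hp : p.Prime) (s : ℕ)
    {γ β c y : S} (hγ : IsNilpotent γ) (hβ : IsUnit β) (hc : (p : S) = γ * c)
    (hy : y ^ p ^ s = 1 + γ * β) :
    ∃ H, IsUnit H ∧ (y - 1) ^ p ^ s = γ * H := by
  obtain ⟨r, hr⟩ := exists_add_pow_prime_pow_eq hp (y - 1) 1 s
  have hpow : (y - 1) ^ p ^ s = γ * (β - c * (y - 1) * r) := by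
    rw [sub_add_cancel, one_pow, hy, hc] at hr
    linear_combination -hr
  have hnil : IsNilpotent (c * (y - 1) * r) := by
    have : IsNilpotent ((y - 1) ^ p ^ s) := hpow ▸ (Commute.all _ _).isNilpotent_mul_right hγ
    exact (Commute.all _ _).isNilpotent_mul_right <|
      (Commute.all _ _).isNilpotent_mul_left this.of_pow
  refine ⟨_, ?_, hpow⟩
  rw [sub_eq_add_neg]
  exact hnil.neg.isUnit_add_left_of_commute hβ (Commute.all _ _)

theorem pow_sub_one_eq_gamma_mul_unit_general (R : Type*) [CommRing R] [IsLocalRing R]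
    (γ : R) (hγ : maximalIdeal R = Ideal.span {γ})
    (e : ℕ) (hnil : γ ^ e = 0)
    (p : ℕ) (hp : p.Prime) [CharP (ResidueField R) p]
    (β : R) (hβ : IsUnit β)
    (n s : ℕ) :
    ∃ H : Polynomial R ⧸ Ideal.span {X ^ (n * p ^ s) - C (1 + γ * β)},
      IsUnit H ∧
      Ideal.Quotient.mk (Ideal.span {X ^ (n * p ^ s) - C (1 + γ * β)}) ((X ^ n - 1) ^ p ^ s) =
        Ideal.Quotient.mk (Ideal.span {X ^ (n * p ^ s) - C (1 + γ * β)}) (C γ) * H := by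
  set π := Ideal.Quotient.mk (Ideal.span {X ^ (n * p ^ s) - C (1 + γ * β)})
  obtain ⟨c, hc⟩ : γ ∣ (p : R) := by
    rw [← Ideal.mem_span_singleton, ← hγ]
    exact natCast_mem_maximalIdeal_of_charP_residueField R p
  have hγ_nil : IsNilpotent (π (C γ)) := ⟨e, by rw [← map_pow, ← C_pow, hnil, C_0, map_zero]⟩
  have hp_eq : (p : Polynomial R ⧸ _) = π (C γ) * π (C c) := by
    rw [← map_natCast π, ← C_eq_natCast, hc, C_mul, map_mul]
  have hxn : π (X ^ n) ^ p ^ s = 1 + π (C γ) * π (C β) := by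
    rw [← map_pow, ← pow_mul, ← map_mul, ← C_mul, ← map_one π, ← map_add, ← C_1, ← C_add,
      Ideal.Quotient.eq]
    exact Ideal.subset_span rfl
  simpa only [map_pow, map_sub, map_one] using
    exists_isUnit_sub_one_pow_eq_mul hp s hγ_nil (hβ.map (π.comp C)) hp_eq hxn

theorem pow_sub_one_eq_gamma_mul_unit (R : Type*) [CommRing R] [Finite R] [IsLocalRing R]
    (hchain : ∀ I J : Ideal R, I ≤ J ∨ J ≤ I)
    (γ : R) (hγ : maximalIdeal R = Ideal.span {γ})
    (e : ℕ) (he : 0 < e) (hnil : γ ^ e = 0) (hnil' : γ ^ (e - 1) ≠ 0)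
    (p : ℕ) (hp : p.Prime) [CharP (ResidueField R) p]
    (β : R) (hβ : IsUnit β)
    (n s : ℕ) (hn : Nat.Coprime n p) (hn0 : 0 < n) :
    ∃ H : Polynomial R ⧸ Ideal.span {X ^ (n * p ^ s) - C (1 + γ * β)},
      IsUnit H ∧
      Ideal.Quotient.mk (Ideal.span {X ^ (n * p ^ s) - C (1 + γ * β)}) ((X ^ n - 1) ^ p ^ s) =
        Ideal.Quotient.mk (Ideal.span {X ^ (n * p ^ s) - C (1 + γ * β)}) (C γ) * H :=
  pow_sub_one_eq_gamma_mul_unit_general R γ hγ e hnil p hp β hβ n s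
end
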